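/- If a graph G is isomorphic to a subgraph of the strong product H₁ ⊠ H₂, then G has a pair of tree-decompositions (B_x : x ∈ V(S)) and (C_y : y ∈ V(T)) such that |B_x ∩ C_y| ≤ (tw(H₁)+1)(tw(H₂)+1) for all nodes x ∈ V(S), y ∈ V(T). -/

import Mathlib

open SimpleGraph

universe u v

/-- The strong product `G ⊠ H` of two simple graphs: distinct vertices `(a,b)`, `(c,d)` are
adjacent iff (`a = c` or `a ~ c`) and (`b = d` or `b ~ d`). -/
def SimpleGraph.strongProd {α β : Type*} (G : SimpleGraph α) (H : SimpleGraph β) :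
    SimpleGraph (α × β) where
  Adj x y := x ≠ y ∧ (x.1 = y.1 ∨ G.Adj x.1 y.1) ∧ (x.2 = y.2 ∨ H.Adj x.2 y.2)
  symm := by
    constructor
    rintro ⟨a, b⟩ ⟨c, d⟩ ⟨hne, h1, h2⟩
    refine ⟨Ne.symm hne, ?_, ?_⟩
    · rcases h1 with h | h
      · exact Or.inl h.symm
      · exact Or.inr h.symm
    · rcases h2 with h | h
      · exact Or.inl h.symm
      · exact Or.inr h.symm
  loopless := by constructor; rintro x ⟨hne, -, -⟩; exact hne rfl

/-- `H.IsContainedEmb G` means `H` is isomorphic to a subgraph of `G`. -/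
def SimpleGraph.IsContainedEmb {α β : Type*} (H : SimpleGraph α) (G : SimpleGraph β) : Prop :=
  ∃ f : α ↪ β, ∀ a b, H.Adj a b → G.Adj (f a) (f b)

/-- A tree-decomposition of `G` indexed by the tree `T`: bags cover all edges, and for each
vertex `v` the nodes whose bags contain `v` induce a nonempty connected subtree of `T`. -/
structure SimpleGraph.TreeDecomp {V : Type u} {ι : Type v} (G : SimpleGraph V)
    (T : SimpleGraph ι) : Type (max u v) where
  bags : ι → Set V
  treeConnected : T.Connected
  treeAcyclic : T.IsAcyclic
  mem_bags_of_adj : ∀ ⦃x y : V⦄, G.Adj x y → ∃ i, x ∈ bags i ∧ y ∈ bags i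
  subtree : ∀ x : V, (T.induce {i | x ∈ bags i}).Connected

/-- The treewidth of a graph: the least `k` admitting a tree-decomposition with all bags
of size at most `k + 1`. -/
noncomputable def SimpleGraph.tw {V : Type u} (G : SimpleGraph V) : ℕ :=
  sInf {k | ∃ (ι : Type u) (T : SimpleGraph ι) (d : G.TreeDecomp T),
    ∀ i, (d.bags i).ncard ≤ k + 1}

/-- Every vertex lies in some bag of a tree-decomposition. -/
lemma SimpleGraph.TreeDecomp.exists_mem_bag {V : Type u} {ι : Type v} {G : SimpleGraph V}
    {T : SimpleGraph ι} (d : G.TreeDecomp T) (v : V) : ∃ i, v ∈ d.bags i := by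
  obtain ⟨⟨i, hi⟩⟩ := (d.subtree v).nonempty
  exact ⟨i, hi⟩

/-- The trivial one-bag tree-decomposition. -/
def trivialDecomp {V : Type u} (G : SimpleGraph V) :
    G.TreeDecomp (⊥ : SimpleGraph PUnit.{u+1}) where
  bags _ := Set.univ
  treeConnected := by
    constructor
    intro a b
    cases a; cases b; exact Reachable.refl _
  treeAcyclic := SimpleGraph.isAcyclic_bot
  mem_bags_of_adj := fun x y _ => ⟨PUnit.unit, trivial, trivial⟩
  subtree := fun x => by
    haveI : Nonempty {i : PUnit.{u+1} | x ∈ (Set.univ : Set V)} := ⟨⟨PUnit.unit, trivial⟩⟩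
    exact ⟨fun a b => Subsingleton.elim a b ▸ Reachable.refl _⟩

/-- There is a tree-decomposition witnessing the treewidth. -/
lemma exists_tw_decomp {α : Type u} [Fintype α] (H : SimpleGraph α) :
    ∃ (ι : Type u) (T : SimpleGraph ι) (d : H.TreeDecomp T),
      ∀ i, (d.bags i).ncard ≤ H.tw + 1 := by
  have hne : {k | ∃ (ι : Type u) (T : SimpleGraph ι) (d : H.TreeDecomp T),
      ∀ i, (d.bags i).ncard ≤ k + 1}.Nonempty := by
    refine ⟨Fintype.card α, PUnit, ⊥, trivialDecomp H, fun i => ?_⟩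
    simp [trivialDecomp, Set.ncard_univ, Nat.card_eq_fintype_card]
  exact Nat.sInf_mem hne

/-- If a graph `G` is isomorphic to a subgraph of the strong product `H₁ ⊠ H₂`, then `G` has
a pair of tree-decompositions such that every bag of the first intersects every bag of the
second in at most `(tw(H₁)+1)·(tw(H₂)+1)` vertices. -/
theorem stmt12 {V α β : Type u} [Fintype V] [Fintype α] [Fintype β]
    (G : SimpleGraph V) (H₁ : SimpleGraph α) (H₂ : SimpleGraph β)
    (h : G.IsContainedEmb (H₁.strongProd H₂)) :
    ∃ (ι₁ ι₂ : Type u) (T₁ : SimpleGraph ι₁) (T₂ : SimpleGraph ι₂)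
      (d₁ : G.TreeDecomp T₁) (d₂ : G.TreeDecomp T₂),
      ∀ i j, (d₁.bags i ∩ d₂.bags j).ncard ≤ (H₁.tw + 1) * (H₂.tw + 1) := by
  obtain ⟨f, hf⟩ := h
  obtain ⟨ι₁, T₁, e₁, he₁⟩ := exists_tw_decomp H₁
  obtain ⟨ι₂, T₂, e₂, he₂⟩ := exists_tw_decomp H₂
  refine ⟨ι₁, ι₂, T₁, T₂, ?_, ?_, ?_⟩
  · exact
    { bags := fun i => {v | (f v).1 ∈ e₁.bags i}
      treeConnected := e₁.treeConnected
      treeAcyclic := e₁.treeAcyclic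
      mem_bags_of_adj := by
        intro x y hxy
        obtain ⟨-, h1, -⟩ := hf x y hxy
        rcases h1 with heq | hadj
        · obtain ⟨i, hi⟩ := e₁.exists_mem_bag (f x).1
          exact ⟨i, hi, by simpa [← heq] using hi⟩
        · obtain ⟨i, hi, hj⟩ := e₁.mem_bags_of_adj hadj
          exact ⟨i, hi, hj⟩
      subtree := fun x => e₁.subtree (f x).1 }
  · exact
    { bags := fun j => {v | (f v).2 ∈ e₂.bags j}
      treeConnected := e₂.treeConnected
      treeAcyclic := e₂.treeAcyclic
      mem_bags_of_adj := by
        intro x y hxy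
        obtain ⟨-, -, h2⟩ := hf x y hxy
        rcases h2 with heq | hadj
        · obtain ⟨j, hj⟩ := e₂.exists_mem_bag (f x).2
          exact ⟨j, hj, by simpa [← heq] using hj⟩
        · obtain ⟨j, hi, hj⟩ := e₂.mem_bags_of_adj hadj
          exact ⟨j, hi, hj⟩
      subtree := fun x => e₂.subtree (f x).2 }
  · intro i j
    classical
    have hsub : ({v | (f v).1 ∈ e₁.bags i} ∩ {v | (f v).2 ∈ e₂.bags j})
        = f ⁻¹' (e₁.bags i ×ˢ e₂.bags j) := by
      ext v; simp [Set.mem_prod]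
    show ({v | (f v).1 ∈ e₁.bags i} ∩ {v | (f v).2 ∈ e₂.bags j}).ncard ≤ _
    rw [hsub]
    calc (f ⁻¹' (e₁.bags i ×ˢ e₂.bags j)).ncard
        = (f '' (f ⁻¹' (e₁.bags i ×ˢ e₂.bags j))).ncard :=
          (Set.ncard_image_of_injective _ f.injective).symm
      _ ≤ (e₁.bags i ×ˢ e₂.bags j).ncard :=
          Set.ncard_le_ncard (Set.image_preimage_subset _ _) (Set.toFinite _)
      _ = (e₁.bags i).ncard * (e₂.bags j).ncard := by
          rw [Set.ncard_eq_toFinset_card', Set.ncard_eq_toFinset_card',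
            Set.ncard_eq_toFinset_card']
          rw [show (e₁.bags i ×ˢ e₂.bags j).toFinset
              = (e₁.bags i).toFinset ×ˢ (e₂.bags j).toFinset by ext; simp]
          exact Finset.card_product _ _
      _ ≤ (H₁.tw + 1) * (H₂.tw + 1) := Nat.mul_le_mul (he₁ i) (he₂ j)
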